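/- In the complex Brauer algebra B_4(3), let F = (1-s_1)(1-s_3), e_{1,4} = s_1 s_3 e_2 s_3 s_1, and Φ = F e_2 F - F - (1/4) F e_2 e_{1,4} F. Then Φ^2 = -4Φ. -/

import Mathlib

noncomputable section

variable (A : Type) [CommRing A] (n : ℕ) (δ : A)

/-- The free-algebra generator corresponding to the transposition generator `s_{i+1}`. -/
def sF (i : Fin n) : FreeAlgebra A (Fin n ⊕ Fin n) := FreeAlgebra.ι A (Sum.inl i)

/-- The free-algebra generator corresponding to the Temperley–Lieb generator `e_{i+1}`. -/
def eF (i : Fin n) : FreeAlgebra A (Fin n ⊕ Fin n) := FreeAlgebra.ι A (Sum.inr i)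

/-- The defining relations of the Brauer algebra `B_{n+1}(δ)` with generators
`s_1, …, s_n`, `e_1, …, e_n` (indexed here by `Fin n`). -/
inductive BrauerRel : FreeAlgebra A (Fin n ⊕ Fin n) → FreeAlgebra A (Fin n ⊕ Fin n) → Prop
  | s_sq (i : Fin n) : BrauerRel (sF A n i * sF A n i) 1
  | e_sq (i : Fin n) : BrauerRel (eF A n i * eF A n i) (algebraMap A _ δ * eF A n i)
  | se (i : Fin n) : BrauerRel (sF A n i * eF A n i) (eF A n i)
  | es (i : Fin n) : BrauerRel (eF A n i * sF A n i) (eF A n i)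
  | comm_ss (i j : Fin n) (h : (i : ℕ) + 2 ≤ j ∨ (j : ℕ) + 2 ≤ i) :
      BrauerRel (sF A n i * sF A n j) (sF A n j * sF A n i)
  | comm_se (i j : Fin n) (h : (i : ℕ) + 2 ≤ j ∨ (j : ℕ) + 2 ≤ i) :
      BrauerRel (sF A n i * eF A n j) (eF A n j * sF A n i)
  | comm_ee (i j : Fin n) (h : (i : ℕ) + 2 ≤ j ∨ (j : ℕ) + 2 ≤ i) :
      BrauerRel (eF A n i * eF A n j) (eF A n j * eF A n i)
  | braid (i j : Fin n) (h : (j : ℕ) = i + 1) :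
      BrauerRel (sF A n i * sF A n j * sF A n i) (sF A n j * sF A n i * sF A n j)
  | eee_up (i j : Fin n) (h : (j : ℕ) = i + 1) :
      BrauerRel (eF A n i * eF A n j * eF A n i) (eF A n i)
  | eee_down (i j : Fin n) (h : (j : ℕ) = i + 1) :
      BrauerRel (eF A n j * eF A n i * eF A n j) (eF A n j)
  | see (i j : Fin n) (h : (j : ℕ) = i + 1) :
      BrauerRel (sF A n i * eF A n j * eF A n i) (sF A n j * eF A n i)
  | ees (i j : Fin n) (h : (j : ℕ) = i + 1) :
      BrauerRel (eF A n j * eF A n i * sF A n j) (eF A n j * sF A n i)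

/-- The Brauer algebra `B_{n+1}(δ)` over `A`, presented by generators and relations. -/
abbrev BrauerAlg : Type := RingQuot (BrauerRel A n δ)

/-- The generator `s_{i+1}` of the Brauer algebra. -/
def sg (i : Fin n) : BrauerAlg A n δ := RingQuot.mkAlgHom A (BrauerRel A n δ) (sF A n i)

/-- The generator `e_{i+1}` of the Brauer algebra. -/
def eg (i : Fin n) : BrauerAlg A n δ := RingQuot.mkAlgHom A (BrauerRel A n δ) (eF A n i)


/-- `F = (1-s_1)(1-s_3)` in the complex Brauer algebra `B_4(3)`. -/
def Fel : BrauerAlg ℂ 3 (3 : ℂ) := (1 - sg ℂ 3 3 0) * (1 - sg ℂ 3 3 2)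

/-- `e_{1,4} = s_1 s_3 e_2 s_3 s_1` in `B_4(3)`. -/
def e14 : BrauerAlg ℂ 3 (3 : ℂ) := sg ℂ 3 3 0 * sg ℂ 3 3 2 * eg ℂ 3 3 1 * sg ℂ 3 3 2 * sg ℂ 3 3 0

/-- `Φ = F e_2 F - F - (1/4) F e_2 e_{1,4} F` in `B_4(3)`. -/
def Phi : BrauerAlg ℂ 3 (3 : ℂ) :=
  Fel * eg ℂ 3 3 1 * Fel - Fel - ((1 : ℂ)/4) • (Fel * eg ℂ 3 3 1 * e14 * Fel)


/-! Since `F = (1 - s_1)(1 - s_3)` satisfies `F² = 4F`, sandwiches multiply by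
`(F x F)(F y F) = 4 F (x F y) F`. As `s_3 s_1 F = F`, the term `F e_2 e_{1,4} F` is `F y F` with
`y = e_2 s_1 s_3 e_2`, so `Φ` lies in the span of `F`, `F e_2 F` and `F y F`, and its square is
computed from `e_2 F e_2 = e_2 + y` (by `e_2² = 3 e_2` and `e_2 s_i e_2 = e_2`) and
`y s_1 s_3 e_2 = 3 y`, which holds because `e_2 s_1 s_3 e_2 = e_2 e_1 e_3 e_2`. -/

section Sandwich

variable {S R : Type*} [CommSemiring S] [Semiring R] [Algebra S R] {F : R} {c : S}

theorem mul_sandwich (hF : F * F = c • F) (x : R) : F * (F * x * F) = c • (F * x * F) := by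
  rw [← mul_assoc, ← mul_assoc, hF, smul_mul_assoc, smul_mul_assoc]

theorem sandwich_mul (hF : F * F = c • F) (x : R) : F * x * F * F = c • (F * x * F) := by
  rw [mul_assoc, hF, mul_smul_comm]

theorem sandwich_mul_sandwich (hF : F * F = c • F) (x y : R) :
    F * x * F * (F * y * F) = c • (F * (x * F * y) * F) := by
  rw [show F * x * F * (F * y * F) = F * x * (F * F) * y * F by simp only [mul_assoc], hF]
  simp only [mul_smul_comm, smul_mul_assoc, mul_assoc]

end Sandwich

section Involution

variable {S R : Type*} [CommRing S] [Ring R] [Algebra S R] {s : R}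

theorem mul_one_sub_of_mul_self_eq_one (h : s * s = 1) : s * (1 - s) = -(1 - s) := by
  rw [mul_sub, mul_one, h, neg_sub]

theorem one_sub_mul_one_sub_of_mul_self_eq_one (h : s * s = 1) :
    (1 - s) * (1 - s) = (2 : S) • (1 - s) := by
  rw [sub_mul (1 : R), one_mul, mul_one_sub_of_mul_self_eq_one h, sub_neg_eq_add, two_smul]

end Involution

section Relations

variable {A n δ}

local notation "𝐬" => sg A n δ
local notation "𝐞" => eg A n δ

theorem sg_mul_self (i : Fin n) : 𝐬 i * 𝐬 i = 1 := by
  simpa [sg] using RingQuot.mkAlgHom_rel A (BrauerRel.s_sq (δ := δ) i)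

theorem eg_mul_self (i : Fin n) : 𝐞 i * 𝐞 i = δ • 𝐞 i := by
  simpa [eg, Algebra.smul_def] using RingQuot.mkAlgHom_rel A (BrauerRel.e_sq (δ := δ) i)

theorem sg_mul_eg_self (i : Fin n) : 𝐬 i * 𝐞 i = 𝐞 i := by
  simpa [sg, eg] using RingQuot.mkAlgHom_rel A (BrauerRel.se (δ := δ) i)

theorem eg_mul_sg_self (i : Fin n) : 𝐞 i * 𝐬 i = 𝐞 i := by
  simpa [sg, eg] using RingQuot.mkAlgHom_rel A (BrauerRel.es (δ := δ) i)

section Distant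

variable {i j : Fin n} (h : (i : ℕ) + 2 ≤ j ∨ (j : ℕ) + 2 ≤ i)
include h

theorem sg_mul_sg_comm : 𝐬 i * 𝐬 j = 𝐬 j * 𝐬 i := by
  simpa [sg] using RingQuot.mkAlgHom_rel A (BrauerRel.comm_ss (δ := δ) i j h)

theorem eg_mul_eg_comm : 𝐞 i * 𝐞 j = 𝐞 j * 𝐞 i := by
  simpa [eg] using RingQuot.mkAlgHom_rel A (BrauerRel.comm_ee (δ := δ) i j h)

end Distant

section Adjacent

variable {i j : Fin n} (h : (j : ℕ) = i + 1)
include h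

theorem eg_mul_eg_mul_eg_left : 𝐞 i * 𝐞 j * 𝐞 i = 𝐞 i := by
  simpa [eg] using RingQuot.mkAlgHom_rel A (BrauerRel.eee_up (δ := δ) i j h)

theorem eg_mul_eg_mul_eg_right : 𝐞 j * 𝐞 i * 𝐞 j = 𝐞 j := by
  simpa [eg] using RingQuot.mkAlgHom_rel A (BrauerRel.eee_down (δ := δ) i j h)

theorem sg_mul_eg_mul_eg : 𝐬 i * 𝐞 j * 𝐞 i = 𝐬 j * 𝐞 i := by
  simpa [sg, eg] using RingQuot.mkAlgHom_rel A (BrauerRel.see (δ := δ) i j h)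

theorem eg_mul_eg_mul_sg : 𝐞 j * 𝐞 i * 𝐬 j = 𝐞 j * 𝐬 i := by
  simpa [sg, eg] using RingQuot.mkAlgHom_rel A (BrauerRel.ees (δ := δ) i j h)

theorem eg_mul_sg_mul_eg_left : 𝐞 i * 𝐬 j * 𝐞 i = 𝐞 i := by
  calc _ = 𝐞 i * (𝐬 i * 𝐞 j * 𝐞 i) := by rw [sg_mul_eg_mul_eg h, mul_assoc]
    _ = 𝐞 i * 𝐬 i * 𝐞 j * 𝐞 i := by simp only [mul_assoc]
    _ = 𝐞 i := by rw [eg_mul_sg_self, eg_mul_eg_mul_eg_left h]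

theorem eg_mul_sg_mul_eg_right : 𝐞 j * 𝐬 i * 𝐞 j = 𝐞 j := by
  rw [← eg_mul_eg_mul_sg h, mul_assoc _ (𝐬 j), sg_mul_eg_self, eg_mul_eg_mul_eg_right h]

end Adjacent

section Consecutive

variable {i j k : Fin n} (hj : (j : ℕ) = i + 1) (hk : (k : ℕ) = j + 1)
include hj hk

theorem eg_mul_sg_mul_sg_mul_eg : 𝐞 j * (𝐬 i * 𝐬 k) * 𝐞 j = 𝐞 j * 𝐞 i * 𝐞 k * 𝐞 j := by
  rw [← mul_assoc, ← eg_mul_eg_mul_sg hj, mul_assoc _ (𝐬 k), ← sg_mul_eg_mul_eg hk]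
  simp only [mul_assoc]
  rw [← mul_assoc (𝐬 j), sg_mul_self, one_mul]

theorem eg_mul_sg_mul_sg_mul_eg_mul_sg_mul_sg_mul_eg :
    𝐞 j * (𝐬 i * 𝐬 k) * 𝐞 j * (𝐬 i * 𝐬 k) * 𝐞 j = δ • (𝐞 j * (𝐬 i * 𝐬 k) * 𝐞 j) := by
  have hik : (i : ℕ) + 2 ≤ k ∨ (k : ℕ) + 2 ≤ i := by omega
  calc _ = 𝐞 j * ((𝐬 i * 𝐬 k) * (𝐞 j * (𝐬 i * 𝐬 k) * 𝐞 j)) := by simp only [mul_assoc]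
    _ = 𝐞 j * ((𝐬 i * 𝐬 k) * (𝐞 j * 𝐞 i * 𝐞 k * 𝐞 j)) := by rw [eg_mul_sg_mul_sg_mul_eg hj hk]
    _ = 𝐞 j * (𝐬 i * 𝐬 k) * 𝐞 j * (𝐞 i * 𝐞 k * 𝐞 j) := by simp only [mul_assoc]
    _ = 𝐞 j * 𝐞 i * (𝐞 k * 𝐞 j * 𝐞 k) * 𝐞 i * 𝐞 j := by
        rw [eg_mul_sg_mul_sg_mul_eg hj hk, eg_mul_eg_comm hik]; simp only [mul_assoc]
    _ = 𝐞 j * (𝐞 i * 𝐞 i) * 𝐞 k * 𝐞 j := by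
        rw [eg_mul_eg_mul_eg_right hk, mul_assoc _ (𝐞 k), eg_mul_eg_comm hik.symm]
        simp only [mul_assoc]
    _ = _ := by
        rw [eg_mul_self, eg_mul_sg_mul_sg_mul_eg hj hk]
        simp only [mul_smul_comm, smul_mul_assoc]

theorem eg_mul_one_sub_mul_one_sub_mul_eg :
    𝐞 j * ((1 - 𝐬 i) * (1 - 𝐬 k)) * 𝐞 j
      = (δ - 2) • 𝐞 j + 𝐞 j * (𝐬 i * 𝐬 k) * 𝐞 j := by
  simp only [mul_sub, sub_mul, mul_one, one_mul, eg_mul_self, eg_mul_sg_mul_eg_left hk,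
    eg_mul_sg_mul_eg_right hj]
  module

end Consecutive

end Relations

section B43

local notation "s₁" => sg ℂ 3 (3 : ℂ) 0
local notation "s₃" => sg ℂ 3 (3 : ℂ) 2
local notation "e₂" => eg ℂ 3 (3 : ℂ) 1
local notation "𝐲" => e₂ * (s₁ * s₃) * e₂

theorem commute_one_sub_sg_zero_one_sub_sg_two : Commute (1 - s₁) (1 - s₃) :=
  have h : Commute s₁ s₃ := sg_mul_sg_comm (Or.inl le_rfl)
  (Commute.one_left _).sub_left ((Commute.one_right _).sub_right h)

theorem Fel_mul_Fel : Fel * Fel = (4 : ℂ) • Fel := by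
  rw [Fel, commute_one_sub_sg_zero_one_sub_sg_two.symm.mul_mul_mul_comm,
    one_sub_mul_one_sub_of_mul_self_eq_one (S := ℂ) (sg_mul_self 0),
    one_sub_mul_one_sub_of_mul_self_eq_one (S := ℂ) (sg_mul_self 2), smul_mul_smul_comm]
  norm_num

theorem sg_zero_mul_Fel : s₁ * Fel = -Fel := by
  rw [Fel, ← mul_assoc, mul_one_sub_of_mul_self_eq_one (sg_mul_self 0), neg_mul (1 - s₁)]

theorem sg_two_mul_Fel : s₃ * Fel = -Fel := by
  rw [Fel, commute_one_sub_sg_zero_one_sub_sg_two.eq, ← mul_assoc,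
    mul_one_sub_of_mul_self_eq_one (sg_mul_self 2), neg_mul (1 - s₃)]

theorem sg_two_mul_sg_zero_mul_Fel : s₃ * s₁ * Fel = Fel := by
  rw [mul_assoc, sg_zero_mul_Fel, mul_neg s₃, sg_two_mul_Fel, neg_neg]

theorem eg_one_mul_Fel_mul_eg_one : e₂ * Fel * e₂ = e₂ + 𝐲 := by
  rw [Fel, eg_mul_one_sub_mul_one_sub_mul_eg (i := 0) (j := 1) (k := 2) rfl rfl]
  norm_num

theorem y_mul_sg_mul_sg_mul_eg_one : 𝐲 * (s₁ * s₃) * e₂ = (3 : ℂ) • 𝐲 :=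
  eg_mul_sg_mul_sg_mul_eg_mul_sg_mul_sg_mul_eg (i := 0) (j := 1) (k := 2) rfl rfl

theorem eg_one_mul_Fel_mul_y : e₂ * Fel * 𝐲 = (4 : ℂ) • 𝐲 :=
  calc _ = e₂ * Fel * e₂ * (s₁ * s₃) * e₂ := by simp only [mul_assoc]
    _ = 𝐲 + 𝐲 * (s₁ * s₃) * e₂ := by rw [eg_one_mul_Fel_mul_eg_one, add_mul, add_mul]
    _ = (4 : ℂ) • 𝐲 := by rw [y_mul_sg_mul_sg_mul_eg_one]; module

theorem y_mul_Fel_mul_eg_one : 𝐲 * Fel * e₂ = (4 : ℂ) • 𝐲 :=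
  calc _ = e₂ * (s₁ * s₃) * (e₂ * Fel * e₂) := by simp only [mul_assoc]
    _ = 𝐲 + 𝐲 * (s₁ * s₃) * e₂ := by
        rw [eg_one_mul_Fel_mul_eg_one, mul_add]; simp only [mul_assoc]
    _ = (4 : ℂ) • 𝐲 := by rw [y_mul_sg_mul_sg_mul_eg_one]; module

theorem y_mul_Fel_mul_y : 𝐲 * Fel * 𝐲 = (12 : ℂ) • 𝐲 :=
  calc _ = e₂ * (s₁ * s₃) * (e₂ * Fel * e₂) * (s₁ * s₃) * e₂ := by simp only [mul_assoc]
    _ = 𝐲 * (s₁ * s₃) * e₂ + 𝐲 * (s₁ * s₃) * e₂ * (s₁ * s₃) * e₂ := by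
        rw [eg_one_mul_Fel_mul_eg_one, mul_add, add_mul, add_mul]; simp only [mul_assoc]
    _ = (12 : ℂ) • 𝐲 := by
        rw [y_mul_sg_mul_sg_mul_eg_one, smul_mul_assoc, smul_mul_assoc,
          y_mul_sg_mul_sg_mul_eg_one]
        module

theorem Phi_eq : Phi = Fel * e₂ * Fel - Fel - ((1 : ℂ) / 4) • (Fel * 𝐲 * Fel) := by
  have h : Fel * e₂ * e14 * Fel = Fel * 𝐲 * Fel :=
    calc _ = Fel * 𝐲 * (s₃ * s₁ * Fel) := by simp only [e14, mul_assoc]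
      _ = _ := by rw [sg_two_mul_sg_zero_mul_Fel]
  rw [Phi, h]

end B43

/-- In the complex Brauer algebra `B_4(3)`, with
`F = (1-s_1)(1-s_3)`, `e_{1,4} = s_1 s_3 e_2 s_3 s_1` and
`Φ = F e_2 F - F - (1/4) F e_2 e_{1,4} F`, one has `Φ² = -4Φ`. -/
theorem brauer_Phi_sq : Phi * Phi = -(4 * Phi) := by
  rw [← map_ofNat (algebraMap ℂ (BrauerAlg ℂ 3 3)) 4, ← Algebra.smul_def, Phi_eq]
  simp only [sub_mul, mul_sub, smul_mul_assoc, mul_smul_comm, Fel_mul_Fel,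
    mul_sandwich Fel_mul_Fel, sandwich_mul Fel_mul_Fel, sandwich_mul_sandwich Fel_mul_Fel,
    eg_one_mul_Fel_mul_eg_one, eg_one_mul_Fel_mul_y, y_mul_Fel_mul_eg_one, y_mul_Fel_mul_y,
    mul_add, add_mul, smul_add]
  module

end
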